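/- arXiv:2412.19011 — 3 statements merged into one kernel-verified Lean document; each statement's English description precedes it below -/
import Mathlib

section
/- Let ι be a nonempty finite index set, let a : ι → ℝ with a_s > 0 for all s, let 0 ≤ ε < 1, and let h : ι → ℝ satisfy √(1 − ε²) ≤ h_s ≤ 1 for all s. Let M > 0, set A = Σ_s a_s, V = (1/3) Σ_s h_s · a_s, and suppose E = A²/M. Then 0 ≤ M·E/(3V) − 3V ≤ (1 + A/(3V)) · A · (1 − √(1 − ε²)). -/
/-!
With `S = 3V = ∑ h_s a_s` one has `M E / (3V) - 3V = A² / S - S = (A - S)(A + S) / S`.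
Since every altitude lies in `[√(1 - ε²), 1]`, `S` lies between `√(1 - ε²) A` and `A`,
which bounds the factor `A - S` between `0` and `(1 - √(1 - ε²)) A`.
-/

-- `S = 0` is allowed: then `A ^ 2 / S = 0` and both bounds hold trivially.
theorem sq_div_sub_self_nonneg {A S : ℝ} (hS : 0 ≤ S) (hSA : S ≤ A) : 0 ≤ A ^ 2 / S - S := by
  rcases hS.eq_or_lt with rfl | hS
  · simp
  · rw [sub_nonneg, le_div_iff₀ hS]
    nlinarith

theorem sq_div_sub_self_le {A S c : ℝ} (hS : 0 ≤ S) (hSA : S ≤ A) (hcS : c * A ≤ S) :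
    A ^ 2 / S - S ≤ (1 + A / S) * A * (1 - c) := by
  rcases hS.eq_or_lt with rfl | hS
  · simp only [div_zero, sub_zero, add_zero, one_mul]
    nlinarith
  · have hfactor : (A - S) * (A + S) ≤ (1 - c) * A * (A + S) :=
      mul_le_mul_of_nonneg_right (by linarith) (by linarith)
    calc A ^ 2 / S - S = (A - S) * (A + S) / S := by field_simp; ring
      _ ≤ (1 - c) * A * (A + S) / S := by gcongr
      _ = (1 + A / S) * A * (1 - c) := by field_simp; ring

theorem spherical_authalic_bound_of_area_preserving_general {ι : Type*} [Fintype ι]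
    (a h : ι → ℝ) (ε M E A V : ℝ)
    (ha : ∀ s, 0 < a s)
    (hh1 : ∀ s, Real.sqrt (1 - ε ^ 2) ≤ h s) (hh2 : ∀ s, h s ≤ 1)
    (hM : 0 < M)
    (hA : A = ∑ s, a s) (hV : V = (1 / 3) * ∑ s, h s * a s)
    (hE : E = A ^ 2 / M) :
    0 ≤ M * E / (3 * V) - 3 * V ∧
      M * E / (3 * V) - 3 * V
        ≤ (1 + A / (3 * V)) * A * (1 - Real.sqrt (1 - ε ^ 2)) := by
  have h3V : 3 * V = ∑ s, h s * a s := by rw [hV]; ring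
  have hME : M * E = A ^ 2 := by rw [hE, mul_div_cancel₀ _ hM.ne']
  have hV0 : 0 ≤ 3 * V := h3V ▸ Finset.sum_nonneg fun s _ =>
    mul_nonneg ((Real.sqrt_nonneg _).trans (hh1 s)) (ha s).le
  have hVA : 3 * V ≤ A := by
    rw [h3V, hA]
    exact Finset.sum_le_sum fun s _ => mul_le_of_le_one_left (ha s).le (hh2 s)
  have hcV : Real.sqrt (1 - ε ^ 2) * A ≤ 3 * V := by
    rw [h3V, hA, Finset.mul_sum]
    exact Finset.sum_le_sum fun s _ => mul_le_mul_of_nonneg_right (hh1 s) (ha s).le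
  rw [hME]
  exact ⟨sq_div_sub_self_nonneg hV0 hVA, sq_div_sub_self_le hV0 hVA hcV⟩

/-- Theorem 3.1, estimate (4.4): with `a_s > 0`, `0 ≤ ε < 1`, `√(1 − ε²) ≤ h_s ≤ 1`,
`M > 0`, `A = Σ a_s`, `V = (1/3) Σ h_s a_s`, and `E = A²/M` (area-preserving case), one has
`0 ≤ M·E/(3V) − 3V ≤ (1 + A/(3V)) · A · (1 − √(1 − ε²))`. -/
theorem spherical_authalic_bound_of_area_preserving {ι : Type*} [Fintype ι] [Nonempty ι]
    (a h : ι → ℝ) (ε M E A V : ℝ)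
    (ha : ∀ s, 0 < a s) (hε0 : 0 ≤ ε) (hε1 : ε < 1)
    (hh1 : ∀ s, Real.sqrt (1 - ε ^ 2) ≤ h s) (hh2 : ∀ s, h s ≤ 1)
    (hM : 0 < M)
    (hA : A = ∑ s, a s) (hV : V = (1 / 3) * ∑ s, h s * a s)
    (hE : E = A ^ 2 / M) :
    0 ≤ M * E / (3 * V) - 3 * V ∧
      M * E / (3 * V) - 3 * V
        ≤ (1 + A / (3 * V)) * A * (1 - Real.sqrt (1 - ε ^ 2)) :=
  spherical_authalic_bound_of_area_preserving_general a h ε M E A V ha hh1 hh2 hM hA hV hE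
end

section
/- Let ι be a nonempty finite index set and 0 ≤ ε < 1. For each s ∈ ι, let u_s, v_s, w_s ∈ ℝ³ be affinely independent unit vectors with u_s · (v_s × w_s) > 0, and suppose the distance from each of u_s, v_s, w_s to the orthogonal projection of the origin onto the affine span of {u_s, v_s, w_s} is at most ε. Let m : ι → ℝ with m_s > 0. Define the image areas a_s = ‖(v_s − u_s) × (w_s − u_s)‖/2, the total image area A = Σ_s a_s, the volume V = Σ_s u_s · (v_s × w_s)/6, the surface area M = Σ_s m_s, and the stretch energy E = Σ_s a_s²/m_s. Then (M·E/(3V) − 3V) − (M·E/A − A) is nonnegative and at most (1 + E·M/(3V·A)) · A · (1 − √(1 − ε²)). -/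
/-!
Let `P` be the foot of the perpendicular from the origin to the plane of a face `[u, v, w]`.
As `P` is normal to that plane, `u · (v × w) = P · ((v - u) × (w - u)) = ‖P‖ · 2a`, so
`3V = ∑ ‖P_s‖ a_s`. Pythagoras gives `‖P_s‖² = 1 - ‖u_s - P_s‖² ∈ [1 - ε², 1]`, hence
`√(1 - ε²) A ≤ 3V ≤ A`, and the estimate follows from the identity
`E_𝔸 - E_A = (1 + ME/(3VA)) (A - 3V)`.
-/

open scoped RealInnerProductSpace

/-- The cross product on `ℝ³` (Euclidean space). -/
noncomputable def cross3 (x y : EuclideanSpace ℝ (Fin 3)) : EuclideanSpace ℝ (Fin 3) :=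
  WithLp.toLp 2 (crossProduct x y)

open Matrix

section CrossProduct

variable {R : Type*} [CommRing R] {p q x y : Fin 3 → R}

theorem cross_cross_eq_zero_of_dotProduct_eq_zero (hx : p ⬝ᵥ x = 0) (hy : p ⬝ᵥ y = 0) :
    p ⨯₃ (x ⨯₃ y) = 0 := by
  rw [cross_cross_eq_smul_sub_smul', hy, dotProduct_comm x p, hx, zero_smul, zero_smul, sub_zero]

theorem dotProduct_cross_sq_of_dotProduct_eq_zero (hx : p ⬝ᵥ x = 0) (hy : p ⬝ᵥ y = 0) :
    (p ⬝ᵥ x ⨯₃ y) ^ 2 = p ⬝ᵥ p * (x ⨯₃ y ⬝ᵥ x ⨯₃ y) := by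
  have h := cross_dot_cross p (x ⨯₃ y) p (x ⨯₃ y)
  rw [cross_cross_eq_zero_of_dotProduct_eq_zero hx hy, zero_dotProduct,
    dotProduct_comm (x ⨯₃ y) p] at h
  linear_combination h

theorem dotProduct_self_mul_dotProduct_cross_eq_zero (hx : p ⬝ᵥ x = 0) (hy : p ⬝ᵥ y = 0)
    (hq : q ⬝ᵥ p = 0) : p ⬝ᵥ p * (q ⬝ᵥ x ⨯₃ y) = 0 := by
  have h := congrArg (q ⬝ᵥ ·) (cross_cross_eq_smul_sub_smul' p (x ⨯₃ y) p)
  simp only [← cross_anticomm p, cross_cross_eq_zero_of_dotProduct_eq_zero hx hy, neg_zero,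
    map_zero, dotProduct_zero, dotProduct_sub, dotProduct_smul, hq, mul_zero, sub_zero,
    smul_eq_mul] at h
  exact h.symm

end CrossProduct

section Euclidean

variable {u v w p : EuclideanSpace ℝ (Fin 3)}

theorem real_inner_eq_dotProduct (x y : EuclideanSpace ℝ (Fin 3)) :
    ⟪x, y⟫ = x.ofLp ⬝ᵥ y.ofLp := by
  rw [EuclideanSpace.inner_eq_star_dotProduct, star_trivial, dotProduct_comm]

theorem inner_cross3 (x y z : EuclideanSpace ℝ (Fin 3)) :
    ⟪x, cross3 y z⟫ = x.ofLp ⬝ᵥ y.ofLp ⨯₃ z.ofLp :=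
  real_inner_eq_dotProduct x _

theorem inner_cross3_sub_sub (u v w : EuclideanSpace ℝ (Fin 3)) :
    ⟪u, cross3 (v - u) (w - u)⟫ = ⟪u, cross3 v w⟫ := by
  simp only [inner_cross3, WithLp.ofLp_sub, map_sub, LinearMap.sub_apply, cross_self,
    dotProduct_sub, dot_self_cross, dot_cross_self, sub_zero]

theorem inner_cross3_sq_of_inner_eq_zero {x y : EuclideanSpace ℝ (Fin 3)} (hx : ⟪p, x⟫ = 0)
    (hy : ⟪p, y⟫ = 0) : ⟪p, cross3 x y⟫ ^ 2 = ‖p‖ ^ 2 * ‖cross3 x y‖ ^ 2 := by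
  rw [real_inner_eq_dotProduct] at hx hy
  rw [← real_inner_self_eq_norm_sq, ← real_inner_self_eq_norm_sq, inner_cross3,
    real_inner_eq_dotProduct, real_inner_eq_dotProduct]
  exact dotProduct_cross_sq_of_dotProduct_eq_zero hx hy

theorem inner_cross3_eq_zero_of_inner_eq_zero {q x y : EuclideanSpace ℝ (Fin 3)} (hp : p ≠ 0)
    (hx : ⟪p, x⟫ = 0) (hy : ⟪p, y⟫ = 0) (hq : ⟪q, p⟫ = 0) : ⟪q, cross3 x y⟫ = 0 := by
  rw [real_inner_eq_dotProduct] at hx hy hq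
  have h := dotProduct_self_mul_dotProduct_cross_eq_zero hx hy hq
  rw [← real_inner_eq_dotProduct, ← inner_cross3] at h
  exact (mul_eq_zero.1 h).resolve_left (inner_self_ne_zero.2 hp)

theorem inner_cross3_eq_norm_mul_norm_of_foot (hp : p ≠ 0) (hpu : ⟪p, u - p⟫ = 0)
    (hpv : ⟪p, v - p⟫ = 0) (hpw : ⟪p, w - p⟫ = 0) (horient : 0 < ⟪u, cross3 v w⟫) :
    ⟪u, cross3 v w⟫ = ‖p‖ * ‖cross3 (v - u) (w - u)‖ := by
  have hv : ⟪p, v - u⟫ = 0 := by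
    rw [← sub_sub_sub_cancel_right v u p, inner_sub_right, hpv, hpu, sub_zero]
  have hw : ⟪p, w - u⟫ = 0 := by
    rw [← sub_sub_sub_cancel_right w u p, inner_sub_right, hpw, hpu, sub_zero]
  have hfoot : ⟪u, cross3 v w⟫ = ⟪p, cross3 (v - u) (w - u)⟫ := by
    rw [← inner_cross3_sub_sub, ← sub_eq_zero, ← inner_sub_left]
    exact inner_cross3_eq_zero_of_inner_eq_zero hp hv hw (by rwa [real_inner_comm])
  rw [hfoot] at horient ⊢
  rw [← sq_eq_sq₀ horient.le (by positivity), mul_pow]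
  exact inner_cross3_sq_of_inner_eq_zero hv hw

theorem norm_bounds_of_inner_sub_eq_zero {F : Type*} [NormedAddCommGroup F]
    [InnerProductSpace ℝ F] {u p : F} {ε : ℝ} (hu : ‖u‖ = 1) (hpu : ⟪p, u - p⟫ = 0)
    (hd : dist u p ≤ ε) : √(1 - ε ^ 2) ≤ ‖p‖ ∧ ‖p‖ ≤ 1 := by
  have hpyth : ‖p‖ ^ 2 + ‖u - p‖ ^ 2 = 1 := by
    have h := norm_add_sq_eq_norm_sq_add_norm_sq_real hpu
    rw [add_sub_cancel, hu] at h
    linear_combination -h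
  have hd2 : ‖u - p‖ ^ 2 ≤ ε ^ 2 := by
    rw [← dist_eq_norm]
    exact pow_le_pow_left₀ dist_nonneg hd 2
  constructor
  · rw [← Real.sqrt_sq (norm_nonneg p)]
    exact Real.sqrt_le_sqrt (by linarith)
  · nlinarith [norm_nonneg p]

theorem inner_cross3_bounds_of_foot {ε : ℝ} (hε : ε < 1) (hu : ‖u‖ = 1)
    (hpu : ⟪p, u - p⟫ = 0) (hpv : ⟪p, v - p⟫ = 0) (hpw : ⟪p, w - p⟫ = 0) (hd : dist u p ≤ ε)
    (horient : 0 < ⟪u, cross3 v w⟫) :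
    √(1 - ε ^ 2) * ‖cross3 (v - u) (w - u)‖ ≤ ⟪u, cross3 v w⟫ ∧
      ⟪u, cross3 v w⟫ ≤ ‖cross3 (v - u) (w - u)‖ := by
  have hp : p ≠ 0 := by
    rintro rfl
    rw [dist_zero_right, hu] at hd
    linarith
  obtain ⟨hp_ge, hp_le⟩ := norm_bounds_of_inner_sub_eq_zero hu hpu hd
  rw [inner_cross3_eq_norm_mul_norm_of_foot hp hpu hpv hpw horient]
  exact ⟨by gcongr, mul_le_of_le_one_left (norm_nonneg _) hp_le⟩

end Euclidean

theorem authalic_energy_gap_bounds {A B M E t : ℝ} (hB : 0 < B) (hME : 0 ≤ M * E)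
    (htB : t * A ≤ B) (hBA : B ≤ A) :
    0 ≤ (M * E / B - B) - (M * E / A - A) ∧
      (M * E / B - B) - (M * E / A - A) ≤ (1 + E * M / (B * A)) * A * (1 - t) := by
  have hA : 0 < A := hB.trans_le hBA
  have hgap : (M * E / B - B) - (M * E / A - A) = (1 + E * M / (B * A)) * (A - B) := by
    field_simp
    ring
  have hk : 0 ≤ 1 + E * M / (B * A) := by
    have : 0 ≤ E * M / (B * A) := div_nonneg (by rwa [mul_comm]) (mul_pos hB hA).le
    linarith
  rw [hgap]
  constructor
  · exact mul_nonneg hk (sub_nonneg.2 hBA)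
  · rw [mul_assoc]
    exact mul_le_mul_of_nonneg_left (by linarith) hk

theorem spherical_authalic_energy_estimate_general {ι : Type*} [Fintype ι] [Nonempty ι]
    (ε : ℝ) (hε1 : ε < 1)
    (u v w P : ι → EuclideanSpace ℝ (Fin 3))
    (hu : ∀ s, ‖u s‖ = 1)
    (horient : ∀ s, 0 < ⟪u s, cross3 (v s) (w s)⟫)
    (hPorth : ∀ s, ∀ q ∈ affineSpan ℝ {u s, v s, w s},
      ⟪(0 : EuclideanSpace ℝ (Fin 3)) - P s, q - P s⟫ = 0)
    (hPu : ∀ s, dist (u s) (P s) ≤ ε)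
    (m : ι → ℝ) (hm : ∀ s, 0 < m s)
    (a : ι → ℝ) (A V M E : ℝ)
    (ha : ∀ s, a s = ‖cross3 (v s - u s) (w s - u s)‖ / 2)
    (hA : A = ∑ s, a s)
    (hV : V = ∑ s, ⟪u s, cross3 (v s) (w s)⟫ / 6)
    (hM : M = ∑ s, m s)
    (hE : E = ∑ s, a s ^ 2 / m s) :
    0 ≤ (M * E / (3 * V) - 3 * V) - (M * E / A - A) ∧
      (M * E / (3 * V) - 3 * V) - (M * E / A - A)
        ≤ (1 + E * M / (3 * V * A)) * A * (1 - Real.sqrt (1 - ε ^ 2)) := by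
  have hface : ∀ s, √(1 - ε ^ 2) * a s ≤ ⟪u s, cross3 (v s) (w s)⟫ / 2 ∧
      ⟪u s, cross3 (v s) (w s)⟫ / 2 ≤ a s := by
    intro s
    have hfoot : ∀ q ∈ ({u s, v s, w s} : Set _), ⟪P s, q - P s⟫ = 0 := fun q hq => by
      simpa only [zero_sub, inner_neg_left, neg_eq_zero] using
        hPorth s q (subset_affineSpan ℝ _ hq)
    obtain ⟨hlow, hhigh⟩ := inner_cross3_bounds_of_foot hε1 (hu s) (hfoot _ (by simp))
      (hfoot _ (by simp)) (hfoot _ (by simp)) (hPu s) (horient s)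
    rw [ha s]
    constructor <;> linarith
  have h3V : 3 * V = ∑ s, ⟪u s, cross3 (v s) (w s)⟫ / 2 := by
    rw [hV, Finset.mul_sum]
    ring_nf
  refine authalic_energy_gap_bounds ?_ ?_ ?_ ?_
  · rw [h3V]
    exact Finset.sum_pos (fun s _ => half_pos (horient s)) Finset.univ_nonempty
  · rw [hM, hE]
    exact mul_nonneg (Finset.sum_nonneg fun s _ => (hm s).le)
      (Finset.sum_nonneg fun s _ => div_nonneg (sq_nonneg _) (hm s).le)
  · rw [h3V, hA, Finset.mul_sum]
    exact Finset.sum_le_sum fun s _ => (hface s).1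
  · rw [h3V, hA]
    exact Finset.sum_le_sum fun s _ => (hface s).2

/-- Theorem 3.1 of the paper stated concretely in `ℝ³`: for positively oriented triangles
`[u_s, v_s, w_s]` with unit-vector vertices and circumradius at most `ε < 1` (the circumcenter
`P_s` being the orthogonal projection of the origin onto the affine span of the vertices),
domain face areas `m_s > 0`, image areas `a_s = ‖(v_s − u_s) × (w_s − u_s)‖/2`, total image
area `A`, volume measurement `V`, surface area `M`, and stretch energy `E`, the difference
`E_𝔸 − E_A = (M·E/(3V) − 3V) − (M·E/A − A)` is nonnegative and at most
`(1 + E·M/(3V·A)) · A · (1 − √(1 − ε²))`. -/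
theorem spherical_authalic_energy_estimate {ι : Type*} [Fintype ι] [Nonempty ι]
    (ε : ℝ) (hε0 : 0 ≤ ε) (hε1 : ε < 1)
    (u v w P : ι → EuclideanSpace ℝ (Fin 3))
    (hind : ∀ s, AffineIndependent ℝ ![u s, v s, w s])
    (hu : ∀ s, ‖u s‖ = 1) (hv : ∀ s, ‖v s‖ = 1) (hw : ∀ s, ‖w s‖ = 1)
    (horient : ∀ s, 0 < ⟪u s, cross3 (v s) (w s)⟫)
    (hPmem : ∀ s, P s ∈ affineSpan ℝ {u s, v s, w s})
    (hPorth : ∀ s, ∀ q ∈ affineSpan ℝ {u s, v s, w s},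
      ⟪(0 : EuclideanSpace ℝ (Fin 3)) - P s, q - P s⟫ = 0)
    (hPu : ∀ s, dist (u s) (P s) ≤ ε) (hPv : ∀ s, dist (v s) (P s) ≤ ε)
    (hPw : ∀ s, dist (w s) (P s) ≤ ε)
    (m : ι → ℝ) (hm : ∀ s, 0 < m s)
    (a : ι → ℝ) (A V M E : ℝ)
    (ha : ∀ s, a s = ‖cross3 (v s - u s) (w s - u s)‖ / 2)
    (hA : A = ∑ s, a s)
    (hV : V = ∑ s, ⟪u s, cross3 (v s) (w s)⟫ / 6)
    (hM : M = ∑ s, m s)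
    (hE : E = ∑ s, a s ^ 2 / m s) :
    0 ≤ (M * E / (3 * V) - 3 * V) - (M * E / A - A) ∧
      (M * E / (3 * V) - 3 * V) - (M * E / A - A)
        ≤ (1 + E * M / (3 * V * A)) * A * (1 - Real.sqrt (1 - ε ^ 2)) :=
  spherical_authalic_energy_estimate_general ε hε1 u v w P hu horient hPorth hPu m hm a A V M E ha
    hA hV hM hE
end

section
/- Let E : ℝᵐ → ℝ be continuously differentiable and bounded below, with gradient g = ∇E Lipschitz continuous on ℝᵐ. Let M be an m×m real symmetric positive definite matrix and 0 < c₁ < c₂ < 1/2. Let (x_k)_{k≥0} be generated by x_{k+1} = x_k + α_k p_k, where p_0 = −M⁻¹ g(x_0), and for k ≥ 1, p_k = −M⁻¹ g(x_k) + β_k p_{k−1} with β_k = (g(x_k)ᵀ M⁻¹ g(x_k)) / (g(x_{k−1})ᵀ M⁻¹ g(x_{k−1})), assuming g(x_k) ≠ 0 for all k, and where each step length α_k > 0 satisfies the strong Wolfe conditions: E(x_k + α_k p_k) − E(x_k) ≤ c₁ α_k g(x_k)ᵀ p_k and |g(x_k + α_k p_k)ᵀ p_k| ≤ c₂ |g(x_k)ᵀ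 p_k|. Then lim inf_{k→∞} ‖g(x_k)‖ = 0. -/
/-!
The preconditioned iteration is the Fletcher–Reeves method for the inner product `⟪u, M v⟫`, in
which the gradient is `M⁻¹ g`. Put `q_k = ⟪g_k, M⁻¹ g_k⟫`. By induction (Al-Baali), the strong Wolfe
conditions with `c₂ < 1/2` keep `(1 - c₂)(-⟪g_k, p_k⟫)` between `(1 - 2c₂) q_k` and `q_k`, so each
`p_k` is a descent direction; the `M`-norm of `p_k` then grows at most like
`q_k² ∑_{j ≤ k} 1/q_j`. Zoutendijk's condition `∑ ⟪g_k, p_k⟫² / ‖p_k‖² < ∞`, a consequence of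
the Wolfe conditions and the Lipschitz bound on `g`, turns into `∑_k (∑_{j ≤ k} 1/q_j)⁻¹ < ∞`.
If `‖g_k‖` stayed away from `0`, the `1/q_j` would be bounded and this series would dominate
the harmonic series.
-/

open Filter Finset
open scoped RealInnerProductSpace

theorem exists_pos_mul_norm_sq_le_inner_self {V : Type*} [NormedAddCommGroup V]
    [InnerProductSpace ℝ V] [FiniteDimensional ℝ V] (T : V →ₗ[ℝ] V)
    (hT : ∀ v ≠ 0, 0 < ⟪v, T v⟫) : ∃ c > 0, ∀ v, c * ‖v‖ ^ 2 ≤ ⟪v, T v⟫ := by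
  rcases subsingleton_or_nontrivial V with hV | hV
  · exact ⟨1, one_pos, fun v => by simp [Subsingleton.elim v 0]⟩
  have hcont : Continuous fun v : V => ⟪v, T v⟫ :=
    continuous_id.inner T.continuous_of_finiteDimensional
  obtain ⟨u, hu, hmin⟩ := (isCompact_sphere (0 : V) 1).exists_isMinOn
    (NormedSpace.sphere_nonempty.mpr zero_le_one) hcont.continuousOn
  refine ⟨⟪u, T u⟫, hT u (ne_zero_of_mem_unit_sphere ⟨u, hu⟩), fun v => ?_⟩
  rcases eq_or_ne v 0 with rfl | hv
  · simp
  have hv' : 0 < ‖v‖ := norm_pos_iff.mpr hv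
  have hw : ‖v‖⁻¹ • v ∈ Metric.sphere (0 : V) 1 := by simp [norm_smul, hv'.ne']
  calc ⟪u, T u⟫ * ‖v‖ ^ 2 ≤ ⟪‖v‖⁻¹ • v, T (‖v‖⁻¹ • v)⟫ * ‖v‖ ^ 2 := by gcongr; exact hmin hw
    _ = ⟪v, T v⟫ := by
      simp only [map_smul, real_inner_smul_left, real_inner_smul_right]
      field_simp

theorem inner_neg_add_smul_apply_neg_add_smul {V : Type*} [NormedAddCommGroup V]
    [InnerProductSpace ℝ V] {A N : V →ₗ[ℝ] V} (hN : N.IsSymmetric) (hNA : ∀ u, N (A u) = u)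
    (u v : V) (b : ℝ) :
    ⟪-A u + b • v, N (-A u + b • v)⟫ = ⟪u, A u⟫ - 2 * b * ⟪u, v⟫ + b ^ 2 * ⟪v, N v⟫ := by
  have hAN : ⟪A u, N v⟫ = ⟪u, v⟫ := by rw [← hN, hNA]
  simp only [map_add, map_neg, map_smul, inner_add_left, inner_add_right, inner_neg_left,
    inner_neg_right, real_inner_smul_left, real_inner_smul_right, hNA, hAN, real_inner_comm u]
  ring

section Zoutendijk

variable {V : Type*} [NormedAddCommGroup V] [InnerProductSpace ℝ V] {f : V → ℝ} {g : V → V}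
  {L : NNReal} {c₁ c₂ : ℝ}

theorem LipschitzWith.one_sub_mul_neg_inner_le (hg : LipschitzWith L g) {x p : V} {α : ℝ}
    (hα : 0 ≤ α) (hcurv : c₂ * ⟪g x, p⟫ ≤ ⟪g (x + α • p), p⟫) :
    (1 - c₂) * -⟪g x, p⟫ ≤ L * α * ‖p‖ ^ 2 :=
  calc (1 - c₂) * -⟪g x, p⟫ ≤ ⟪g (x + α • p) - g x, p⟫ := by rw [inner_sub_left]; linarith
    _ ≤ ‖g (x + α • p) - g x‖ * ‖p‖ := real_inner_le_norm _ _
    _ ≤ L * ‖α • p‖ * ‖p‖ := by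
      gcongr
      simpa [dist_eq_norm] using hg.dist_le_mul (x + α • p) x
    _ = L * α * ‖p‖ ^ 2 := by rw [norm_smul, Real.norm_of_nonneg hα]; ring

theorem LipschitzWith.mul_inner_sq_div_norm_sq_le_of_wolfe (hg : LipschitzWith L g)
    {x p : V} {α : ℝ} (hc₁ : 0 ≤ c₁) (hα : 0 ≤ α) (hdesc : ⟪g x, p⟫ ≤ 0)
    (hdecr : f (x + α • p) ≤ f x + c₁ * α * ⟪g x, p⟫)
    (hcurv : c₂ * ⟪g x, p⟫ ≤ ⟪g (x + α • p), p⟫) :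
    c₁ * (1 - c₂) * ⟪g x, p⟫ ^ 2 / ‖p‖ ^ 2 ≤ L * (f x - f (x + α • p)) := by
  rcases eq_or_ne p 0 with rfl | hp
  · simp
  rw [div_le_iff₀ (by positivity)]
  have hc₁P : 0 ≤ c₁ * -⟪g x, p⟫ := mul_nonneg hc₁ (neg_nonneg.mpr hdesc)
  calc c₁ * (1 - c₂) * ⟪g x, p⟫ ^ 2 = c₁ * -⟪g x, p⟫ * ((1 - c₂) * -⟪g x, p⟫) := by ring
    _ ≤ c₁ * -⟪g x, p⟫ * (L * α * ‖p‖ ^ 2) :=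
      mul_le_mul_of_nonneg_left (hg.one_sub_mul_neg_inner_le hα hcurv) hc₁P
    _ = L * ‖p‖ ^ 2 * -(c₁ * α * ⟪g x, p⟫) := by ring
    _ ≤ L * ‖p‖ ^ 2 * (f x - f (x + α • p)) := by gcongr; linarith
    _ = L * (f x - f (x + α • p)) * ‖p‖ ^ 2 := by ring

theorem summable_inner_sq_div_norm_sq_of_wolfe (hf : BddBelow (Set.range f))
    (hg : LipschitzWith L g) (hc₁ : 0 < c₁) (hc₂ : c₂ < 1) {x p : ℕ → V} {α : ℕ → ℝ}
    (hx : ∀ k, x (k + 1) = x k + α k • p k) (hα : ∀ k, 0 ≤ α k)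
    (hdesc : ∀ k, ⟪g (x k), p k⟫ ≤ 0)
    (hdecr : ∀ k, f (x (k + 1)) ≤ f (x k) + c₁ * α k * ⟪g (x k), p k⟫)
    (hcurv : ∀ k, c₂ * ⟪g (x k), p k⟫ ≤ ⟪g (x (k + 1)), p k⟫) :
    Summable fun k => ⟪g (x k), p k⟫ ^ 2 / ‖p k‖ ^ 2 := by
  obtain ⟨B, hB⟩ := hf
  have hc : 0 < c₁ * (1 - c₂) := mul_pos hc₁ (sub_pos.mpr hc₂)
  have hstep k : c₁ * (1 - c₂) * (⟪g (x k), p k⟫ ^ 2 / ‖p k‖ ^ 2)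
      ≤ L * (f (x k) - f (x (k + 1))) := by
    have hdecr := hdecr k
    have hcurv := hcurv k
    rw [hx] at hdecr hcurv ⊢
    rw [← mul_div_assoc]
    exact hg.mul_inner_sq_div_norm_sq_le_of_wolfe hc₁.le (hα k) (hdesc k) hdecr hcurv
  refine (summable_mul_left_iff hc.ne').mp <|
    summable_of_sum_range_le (c := L * (f (x 0) - B)) (fun k => by positivity) fun n => ?_
  calc ∑ k ∈ range n, c₁ * (1 - c₂) * (⟪g (x k), p k⟫ ^ 2 / ‖p k‖ ^ 2)
      ≤ ∑ k ∈ range n, L * (f (x k) - f (x (k + 1))) := sum_le_sum fun k _ => hstep k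
    _ = L * (f (x 0) - f (x n)) := by rw [← mul_sum, sum_range_sub']
    _ ≤ L * (f (x 0) - B) := by gcongr; exact hB (Set.mem_range_self _)

end Zoutendijk

section FletcherReeves

-- `q k`, `P k`, `r k`, `n k` stand for `⟪g_k, M⁻¹ g_k⟫`, `⟪g_k, p_k⟫`, `⟪g_{k+1}, p_k⟫` and
-- `⟪p_k, M p_k⟫`.

variable {c₂ : ℝ} {q P r n : ℕ → ℝ}

theorem one_sub_mul_abs_le_of_abs_le_mul_abs {a b d : ℝ} (hc₂ : 0 ≤ c₂) (hc₂' : c₂ ≤ 1)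
    (hb : b ≤ 0) (hbd : (1 - c₂) * -b ≤ d) (hab : |a| ≤ c₂ * |b|) :
    (1 - c₂) * |a| ≤ c₂ * d :=
  calc (1 - c₂) * |a| ≤ (1 - c₂) * (c₂ * -b) :=
        mul_le_mul_of_nonneg_left (by rwa [← abs_of_nonpos hb]) (by linarith)
    _ = c₂ * ((1 - c₂) * -b) := by ring
    _ ≤ c₂ * d := by gcongr

theorem fletcherReeves_sufficient_descent (hc₂ : 0 ≤ c₂) (hc₂' : c₂ ≤ 1 / 2)
    (hq : ∀ k, 0 < q k) (hP0 : P 0 = -q 0)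
    (hP : ∀ k, P (k + 1) = -q (k + 1) + q (k + 1) / q k * r k)
    (hr : ∀ k, |r k| ≤ c₂ * |P k|) (k : ℕ) :
    (1 - 2 * c₂) * q k ≤ (1 - c₂) * -P k ∧ (1 - c₂) * -P k ≤ q k := by
  induction k with
  | zero => rw [hP0]; constructor <;> nlinarith [hq 0]
  | succ k ih =>
    have hPk : P k ≤ 0 := by nlinarith [hq k, ih.1]
    have hrk := one_sub_mul_abs_le_of_abs_le_mul_abs hc₂ (by linarith) hPk ih.2 (hr k)
    have hβr : |(1 - c₂) * (q (k + 1) / q k * r k)| ≤ c₂ * q (k + 1) := by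
      rw [abs_mul, abs_mul, abs_of_pos (by linarith), abs_of_pos (div_pos (hq _) (hq k))]
      calc (1 - c₂) * (q (k + 1) / q k * |r k|) = q (k + 1) / q k * ((1 - c₂) * |r k|) := by
            ring
        _ ≤ q (k + 1) / q k * (c₂ * q k) := by gcongr; exact (div_pos (hq _) (hq k)).le
        _ = c₂ * q (k + 1) := by field_simp [(hq k).ne']
    obtain ⟨hlo, hhi⟩ := abs_le.mp hβr
    rw [hP k]
    constructor <;> linarith

theorem fletcherReeves_norm_growth (hc₂ : 0 ≤ c₂) (hc₂' : c₂ < 1) (hq : ∀ k, 0 < q k)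
    (hn0 : n 0 = q 0)
    (hn : ∀ k, n (k + 1)
      = q (k + 1) - 2 * (q (k + 1) / q k) * r k + (q (k + 1) / q k) ^ 2 * n k)
    (hrq : ∀ k, (1 - c₂) * |r k| ≤ c₂ * q k) (k : ℕ) :
    (1 - c₂) * n k ≤ (1 + c₂) * q k ^ 2 * ∑ j ∈ range (k + 1), (q j)⁻¹ := by
  suffices h : (1 - c₂) * (n k / q k ^ 2) ≤ (1 + c₂) * ∑ j ∈ range (k + 1), (q j)⁻¹ by
    rw [mul_div_assoc', div_le_iff₀ (pow_pos (hq k) 2)] at h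
    linarith
  induction k with
  | zero =>
    rw [hn0, sum_range_one, sq, ← div_div, div_self (hq 0).ne', one_div]
    gcongr
    · exact (inv_pos.mpr (hq 0)).le
    · linarith
  | succ k ih =>
    have hrec : n (k + 1) / q (k + 1) ^ 2
        = n k / q k ^ 2 + (q (k + 1))⁻¹ - 2 * r k / (q k * q (k + 1)) := by
      rw [hn k]; field_simp [(hq k).ne', (hq (k + 1)).ne']; ring
    have hr : (1 - c₂) * -(2 * r k / (q k * q (k + 1))) ≤ 2 * c₂ * (q (k + 1))⁻¹ := by
      have hqq : 0 < q k * q (k + 1) := mul_pos (hq k) (hq _)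
      calc (1 - c₂) * -(2 * r k / (q k * q (k + 1)))
          = 2 * ((1 - c₂) * -r k) / (q k * q (k + 1)) := by ring
        _ ≤ 2 * (c₂ * q k) / (q k * q (k + 1)) := by
          refine div_le_div_of_nonneg_right ?_ hqq.le
          have := mul_le_mul_of_nonneg_left (neg_le_abs (r k)) (sub_nonneg.mpr hc₂'.le)
          linarith [hrq k]
        _ = 2 * c₂ * (q (k + 1))⁻¹ := by field_simp [(hq k).ne']
    rw [hrec, sum_range_succ]
    linarith

end FletcherReeves

theorem inv_le_mul_sq_div_of_fletcherReeves {c₂ q P n S : ℝ} (hc₂ : 0 ≤ c₂)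
    (hc₂' : c₂ < 1 / 2) (hq : 0 ≤ q) (hn : 0 < n) (hS : 0 < S)
    (hdesc : (1 - 2 * c₂) * q ≤ (1 - c₂) * -P)
    (hgrowth : (1 - c₂) * n ≤ (1 + c₂) * q ^ 2 * S) :
    S⁻¹ ≤ (1 - c₂) * (1 + c₂) / (1 - 2 * c₂) ^ 2 * (P ^ 2 / n) := by
  have h12 : 0 < 1 - 2 * c₂ := by linarith
  have key : (1 - c₂) * ((1 - 2 * c₂) ^ 2 * n) ≤ (1 - c₂) * ((1 - c₂) * (1 + c₂) * P ^ 2 * S) :=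
    calc (1 - c₂) * ((1 - 2 * c₂) ^ 2 * n) = (1 - 2 * c₂) ^ 2 * ((1 - c₂) * n) := by ring
      _ ≤ (1 - 2 * c₂) ^ 2 * ((1 + c₂) * q ^ 2 * S) := by gcongr
      _ = (1 + c₂) * S * ((1 - 2 * c₂) * q) ^ 2 := by ring
      _ ≤ (1 + c₂) * S * ((1 - c₂) * -P) ^ 2 :=
        mul_le_mul_of_nonneg_left (pow_le_pow_left₀ (mul_nonneg h12.le hq) hdesc 2)
          (by positivity)
      _ = (1 - c₂) * ((1 - c₂) * (1 + c₂) * P ^ 2 * S) := by ring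
  have key' := le_of_mul_le_mul_left key (by linarith)
  rw [mul_div_assoc', div_mul_eq_mul_div, div_div, inv_eq_one_div,
    div_le_div_iff₀ hS (by positivity)]
  linarith

theorem not_summable_inv_sum_range_of_bddAbove {u : ℕ → ℝ} (hu : ∀ k, 0 < u k)
    (hbdd : BddAbove (Set.range u)) : ¬Summable fun k => (∑ j ∈ range (k + 1), u j)⁻¹ := by
  obtain ⟨T, hT⟩ := hbdd
  have huT j : u j ≤ T := hT ⟨j, rfl⟩
  intro hs
  have hharm : Summable fun k : ℕ => ((k : ℝ) + 1)⁻¹ := by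
    refine Summable.of_nonneg_of_le (fun k => by positivity) (fun k => ?_) (hs.mul_left T)
    have hsum : ∑ j ∈ range (k + 1), u j ≤ ((k : ℝ) + 1) * T := by
      simpa using sum_le_sum fun j (_ : j ∈ range (k + 1)) => huT j
    rw [← div_eq_mul_inv, le_div_iff₀ (sum_pos (fun j _ => hu j) nonempty_range_add_one),
      inv_mul_le_iff₀ (by positivity)]
    exact hsum
  exact Real.not_summable_natCast_inv ((summable_nat_add_iff 1).mp (by simpa using hharm))

theorem liminf_eq_zero_of_frequently_lt {u : ℕ → ℝ} (hu : ∀ k, 0 ≤ u k)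
    (h : ∀ ε > 0, ∃ᶠ k in atTop, u k < ε) : liminf u atTop = 0 := by
  have hbdd : IsBoundedUnder (· ≥ ·) atTop u := isBoundedUnder_of ⟨0, hu⟩
  refine le_antisymm (le_of_forall_pos_le_add fun ε hε => ?_) ?_
  · rw [zero_add]
    exact liminf_le_of_frequently_le ((h ε hε).mono fun k hk => hk.le) hbdd
  · exact le_liminf_of_le (IsCoboundedUnder.of_frequently_le ((h 1 one_pos).mono
      fun k hk => hk.le)) (Eventually.of_forall hu)

theorem liminf_eq_zero_of_summable_inv_sum_range_inv {u q : ℕ → ℝ} {a : ℝ} (ha : 0 < a)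
    (hu : ∀ k, 0 ≤ u k) (hq : ∀ k, 0 < q k) (hqu : ∀ k, a * u k ^ 2 ≤ q k)
    (hs : Summable fun k => (∑ j ∈ range (k + 1), (q j)⁻¹)⁻¹) : liminf u atTop = 0 := by
  refine liminf_eq_zero_of_frequently_lt hu fun b hb hbig =>
    not_summable_inv_sum_range_of_bddAbove (fun k => inv_pos.mpr (hq k)) ?_ hs
  refine IsBoundedUnder.bddAbove_range ⟨(a * b ^ 2)⁻¹, eventually_map.mpr ?_⟩
  filter_upwards [hbig] with k hk
  have hbu : a * b ^ 2 ≤ a * u k ^ 2 := by gcongr; exact not_lt.mp hk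
  exact inv_anti₀ (by positivity) (hbu.trans (hqu k))

theorem summable_inv_sum_range_inv_of_preconditioned_fletcherReeves {V : Type*}
    [NormedAddCommGroup V] [InnerProductSpace ℝ V] [FiniteDimensional ℝ V] {f : V → ℝ}
    {g : V → V} {L : NNReal} (hf : BddBelow (Set.range f)) (hg : LipschitzWith L g)
    {A N : V →ₗ[ℝ] V} (hApos : ∀ v ≠ 0, 0 < ⟪v, A v⟫) (hNpos : ∀ v ≠ 0, 0 < ⟪v, N v⟫)
    (hN : N.IsSymmetric) (hNA : ∀ u, N (A u) = u)
    {c₁ c₂ : ℝ} (hc₁ : 0 < c₁) (hc₂ : 0 ≤ c₂) (hc₂' : c₂ < 1 / 2)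
    {x p : ℕ → V} {α β : ℕ → ℝ} (hx : ∀ k, x (k + 1) = x k + α k • p k)
    (hp0 : p 0 = -A (g (x 0)))
    (hβ : ∀ k, β (k + 1) = ⟪g (x (k + 1)), A (g (x (k + 1)))⟫ / ⟪g (x k), A (g (x k))⟫)
    (hp : ∀ k, p (k + 1) = -A (g (x (k + 1))) + β (k + 1) • p k)
    (hgne : ∀ k, g (x k) ≠ 0) (hα : ∀ k, 0 ≤ α k)
    (hdecr : ∀ k, f (x (k + 1)) ≤ f (x k) + c₁ * α k * ⟪g (x k), p k⟫)
    (hcurv : ∀ k, |⟪g (x (k + 1)), p k⟫| ≤ c₂ * |⟪g (x k), p k⟫|) :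
    Summable fun k => (∑ j ∈ range (k + 1), ⟪g (x j), A (g (x j))⟫⁻¹)⁻¹ := by
  set q : ℕ → ℝ := fun k => ⟪g (x k), A (g (x k))⟫
  set P : ℕ → ℝ := fun k => ⟪g (x k), p k⟫
  set n : ℕ → ℝ := fun k => ⟪p k, N (p k)⟫
  have hq k : 0 < q k := hApos _ (hgne k)
  have hdesc := fletcherReeves_sufficient_descent hc₂ hc₂'.le hq
    (by simp [q, hp0, inner_neg_right])
    (fun k => by simp only [hp, hβ, inner_add_right, inner_neg_right, real_inner_smul_right]; rfl)
    hcurv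
  have hPneg k : P k < 0 := by nlinarith [(hdesc k).1, hq k]
  have hzout := summable_inner_sq_div_norm_sq_of_wolfe hf hg hc₁ (by linarith) hx hα
    (fun k => (hPneg k).le) hdecr fun k => by
      have := (abs_le.mp (hcurv k)).1
      rw [abs_of_neg (hPneg k)] at this
      linarith
  have hgrowth := fletcherReeves_norm_growth (n := n) hc₂ (by linarith) hq
    (by simp [n, q, hp0, hNA, real_inner_comm])
    (fun k => by simp only [n, hp, hβ, inner_neg_add_smul_apply_neg_add_smul hN hNA]; ring)
    fun k => one_sub_mul_abs_le_of_abs_le_mul_abs hc₂ (by linarith) (hPneg k).le (hdesc k).2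
      (hcurv k)
  obtain ⟨μ, hμ, hNc⟩ := exists_pos_mul_norm_sq_le_inner_self N hNpos
  have hpne k : p k ≠ 0 := fun h => (hPneg k).ne (by simp [P, h])
  have hPn k : P k ^ 2 / n k ≤ μ⁻¹ * (P k ^ 2 / ‖p k‖ ^ 2) := by
    have : 0 < ‖p k‖ := norm_pos_iff.mpr (hpne k)
    rw [inv_mul_eq_div, div_div]
    gcongr
    rw [mul_comm]
    exact hNc (p k)
  refine Summable.of_nonneg_of_le
    (fun k => inv_nonneg.mpr (sum_nonneg fun j _ => (inv_pos.mpr (hq j)).le))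
    (fun k => (inv_le_mul_sq_div_of_fletcherReeves hc₂ hc₂' (hq k).le (hNpos _ (hpne k))
      (sum_pos (fun j _ => inv_pos.mpr (hq j)) nonempty_range_add_one) (hdesc k).1
      (hgrowth k)).trans (mul_le_mul_of_nonneg_left (hPn k)
        (div_nonneg (mul_nonneg (by linarith) (by linarith)) (sq_nonneg _))))
    ((hzout.mul_left μ⁻¹).mul_left ((1 - c₂) * (1 + c₂) / (1 - 2 * c₂) ^ 2))

theorem Matrix.PosDef.inner_toEuclideanLin_self_pos {ι : Type*} [Fintype ι] [DecidableEq ι]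
    {P : Matrix ι ι ℝ} (hP : P.PosDef) {v : EuclideanSpace ℝ ι} (hv : v ≠ 0) :
    0 < ⟪v, Matrix.toEuclideanLin P v⟫ := by
  rw [EuclideanSpace.inner_eq_star_dotProduct, Matrix.ofLp_toLpLin, Matrix.toLin'_apply,
    dotProduct_comm]
  exact hP.dotProduct_mulVec_pos fun h => hv (by simpa using congrArg (WithLp.toLp 2) h)

theorem Matrix.toEuclideanLin_apply_toEuclideanLin_inv {ι : Type*} [Fintype ι] [DecidableEq ι]
    {P : Matrix ι ι ℝ} (hP : IsUnit P) (v : EuclideanSpace ℝ ι) :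
    Matrix.toEuclideanLin P (Matrix.toEuclideanLin P⁻¹ v) = v := by
  simp [Matrix.toLpLin_apply, Matrix.mulVec_mulVec,
    Matrix.mul_nonsing_inv _ ((Matrix.isUnit_iff_isUnit_det P).mp hP)]

theorem preconditioned_nonlinear_CG_global_convergence_general
    (m : ℕ) (E : EuclideanSpace ℝ (Fin m) → ℝ)
    (g : EuclideanSpace ℝ (Fin m) → EuclideanSpace ℝ (Fin m))
    (hbdd : BddBelow (Set.range E))
    (L : NNReal) (hLip : LipschitzWith L g)
    (M : Matrix (Fin m) (Fin m) ℝ) (hMpos : M.PosDef)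
    (c₁ c₂ : ℝ) (hc₁ : 0 < c₁) (hc₁₂ : c₁ < c₂) (hc₂ : c₂ < 1 / 2)
    (x p : ℕ → EuclideanSpace ℝ (Fin m)) (α β : ℕ → ℝ)
    (hx : ∀ k, x (k + 1) = x k + α k • p k)
    (hp0 : p 0 = -(Matrix.toEuclideanLin M⁻¹ (g (x 0))))
    (hβ : ∀ k, β (k + 1)
      = ⟪g (x (k + 1)), Matrix.toEuclideanLin M⁻¹ (g (x (k + 1)))⟫
          / ⟪g (x k), Matrix.toEuclideanLin M⁻¹ (g (x k))⟫)
    (hp : ∀ k, p (k + 1)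
      = -(Matrix.toEuclideanLin M⁻¹ (g (x (k + 1)))) + β (k + 1) • p k)
    (hgne : ∀ k, g (x k) ≠ 0)
    (hα : ∀ k, 0 < α k)
    (hWolfe1 : ∀ k, E (x k + α k • p k) - E (x k) ≤ c₁ * α k * ⟪g (x k), p k⟫)
    (hWolfe2 : ∀ k, |⟪g (x k + α k • p k), p k⟫| ≤ c₂ * |⟪g (x k), p k⟫|) :
    Filter.liminf (fun k => ‖g (x k)‖) Filter.atTop = 0 := by
  have hMinv : M⁻¹.PosDef := hMpos.inv
  obtain ⟨a, ha, hA⟩ := exists_pos_mul_norm_sq_le_inner_self _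
    fun _ => hMinv.inner_toEuclideanLin_self_pos
  have hs := summable_inv_sum_range_inv_of_preconditioned_fletcherReeves hbdd hLip
    (fun _ => hMinv.inner_toEuclideanLin_self_pos) (fun _ => hMpos.inner_toEuclideanLin_self_pos)
    (Matrix.isSymmetric_toEuclideanLin_iff.mpr hMpos.1)
    (Matrix.toEuclideanLin_apply_toEuclideanLin_inv hMpos.isUnit) hc₁ (hc₁.trans hc₁₂).le hc₂
    hx hp0 hβ hp hgne (fun k => (hα k).le) (fun k => by rw [hx]; linarith [hWolfe1 k])
    (fun k => by rw [hx]; exact hWolfe2 k)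
  exact liminf_eq_zero_of_summable_inv_sum_range_inv ha (fun _ => norm_nonneg _)
    (fun k => hMinv.inner_toEuclideanLin_self_pos (hgne k)) (fun _ => hA _) hs

/-- Theorem 4.2 (global convergence of the preconditioned nonlinear CG method): let
`E : ℝᵐ → ℝ` be continuously differentiable (with gradient `g`) and bounded below, with `g`
Lipschitz; let `M` be symmetric positive definite and `0 < c₁ < c₂ < 1/2`. If the iterates
`x_{k+1} = x_k + α_k p_k` follow the preconditioned Fletcher–Reeves CG scheme
`p_0 = −M⁻¹ g(x_0)`, `p_{k+1} = −M⁻¹ g(x_{k+1}) + β_{k+1} p_k` with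
`β_{k+1} = ⟪g(x_{k+1}), M⁻¹ g(x_{k+1})⟫ / ⟪g(x_k), M⁻¹ g(x_k)⟫`, the gradients never vanish,
and every step length `α_k > 0` satisfies the strong Wolfe conditions, then
`lim inf_{k→∞} ‖g(x_k)‖ = 0`. -/
theorem preconditioned_nonlinear_CG_global_convergence
    (m : ℕ) (E : EuclideanSpace ℝ (Fin m) → ℝ)
    (g : EuclideanSpace ℝ (Fin m) → EuclideanSpace ℝ (Fin m))
    (hgrad : ∀ x, HasGradientAt E (g x) x)
    (hbdd : BddBelow (Set.range E))
    (L : NNReal) (hLip : LipschitzWith L g)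
    (M : Matrix (Fin m) (Fin m) ℝ) (hMsymm : M.IsSymm) (hMpos : M.PosDef)
    (c₁ c₂ : ℝ) (hc₁ : 0 < c₁) (hc₁₂ : c₁ < c₂) (hc₂ : c₂ < 1 / 2)
    (x p : ℕ → EuclideanSpace ℝ (Fin m)) (α β : ℕ → ℝ)
    (hx : ∀ k, x (k + 1) = x k + α k • p k)
    (hp0 : p 0 = -(Matrix.toEuclideanLin M⁻¹ (g (x 0))))
    (hβ : ∀ k, β (k + 1)
      = ⟪g (x (k + 1)), Matrix.toEuclideanLin M⁻¹ (g (x (k + 1)))⟫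
          / ⟪g (x k), Matrix.toEuclideanLin M⁻¹ (g (x k))⟫)
    (hp : ∀ k, p (k + 1)
      = -(Matrix.toEuclideanLin M⁻¹ (g (x (k + 1)))) + β (k + 1) • p k)
    (hgne : ∀ k, g (x k) ≠ 0)
    (hα : ∀ k, 0 < α k)
    (hWolfe1 : ∀ k, E (x k + α k • p k) - E (x k) ≤ c₁ * α k * ⟪g (x k), p k⟫)
    (hWolfe2 : ∀ k, |⟪g (x k + α k • p k), p k⟫| ≤ c₂ * |⟪g (x k), p k⟫|) :
    Filter.liminf (fun k => ‖g (x k)‖) Filter.atTop = 0 :=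
  preconditioned_nonlinear_CG_global_convergence_general m E g hbdd L hLip M hMpos c₁ c₂ hc₁ hc₁₂
    hc₂ x p α β hx hp0 hβ hp hgne hα hWolfe1 hWolfe2
end
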